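/- arXiv:1810.04206 — 2 statements merged into one kernel-verified Lean document; each statement's English description precedes it below -/
import Mathlib

section
/- Let E and F be nonempty closed convex sets in ℝⁿ such that E + F = ℝⁿ and for every u ∈ ℝⁿ the metric projections p_E(u) and p_F(u) are orthogonal, i.e., p_E(u) · p_F(u) = 0. Then E ⊆ F° and F ⊆ E°. -/
/-!
Project `u = e + f` on `E` and `F`, with `e ∈ E`, `f ∈ F`. The nearest-point property gives
`‖u - p_E u‖ ≤ ‖f‖` and `‖u - p_F u‖ ≤ ‖e‖`, while orthogonality of the two projections gives
`‖u‖² ≤ ‖u - p_E u‖² + ‖u - p_F u‖²` (expand `0 ≤ ‖u - p_E u - p_F u‖²`).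
Hence `‖e + f‖² ≤ ‖e‖² + ‖f‖²`, that is `⟪e, f⟫ ≤ 0`.
-/

open RealInnerProductSpace Pointwise

/-- The (negative) polar set of `X`. -/
def polarSet {n : ℕ} (X : Set (EuclideanSpace ℝ (Fin n))) : Set (EuclideanSpace ℝ (Fin n)) :=
  {x | ∀ e ∈ X, ⟪x, e⟫ ≤ 0}

/-- The orthogonal complement of a set `X`. -/
def orthComp {n : ℕ} (X : Set (EuclideanSpace ℝ (Fin n))) : Set (EuclideanSpace ℝ (Fin n)) :=
  {x | ∀ u ∈ X, ⟪x, u⟫ = 0}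

/-- `y` is the metric projection of `u` on `E`: it belongs to `E` and is nearest to `u`. -/
def IsMetricProj {n : ℕ} (E : Set (EuclideanSpace ℝ (Fin n)))
    (u y : EuclideanSpace ℝ (Fin n)) : Prop :=
  y ∈ E ∧ ∀ x ∈ E, ‖u - y‖ ≤ ‖u - x‖

theorem norm_sub_sub_sq_add_norm_sq {V : Type*} [NormedAddCommGroup V] [InnerProductSpace ℝ V]
    (u y z : V) : ‖u - y - z‖ ^ 2 + ‖u‖ ^ 2 = ‖u - y‖ ^ 2 + ‖u - z‖ ^ 2 + 2 * ⟪y, z⟫ := by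
  simp only [norm_sub_sq_real, inner_sub_left]
  ring

theorem norm_sq_le_of_inner_eq_zero {V : Type*} [NormedAddCommGroup V] [InnerProductSpace ℝ V]
    {u y z : V} (hyz : ⟪y, z⟫ = 0) : ‖u‖ ^ 2 ≤ ‖u - y‖ ^ 2 + ‖u - z‖ ^ 2 := by
  nlinarith [norm_sub_sub_sq_add_norm_sq u y z, sq_nonneg ‖u - y - z‖]

section

variable {n : ℕ}

theorem exists_isMetricProj {S : Set (EuclideanSpace ℝ (Fin n))} (hne : S.Nonempty)
    (hcl : IsClosed S) (hconv : Convex ℝ S) (u : EuclideanSpace ℝ (Fin n)) :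
    ∃ y, IsMetricProj S u y := by
  obtain ⟨v, hvS, hv⟩ := exists_norm_eq_iInf_of_complete_convex hne hcl.isComplete hconv u
  refine ⟨v, hvS, fun x hx => ?_⟩
  rw [hv]
  exact ciInf_le ⟨0, Set.forall_mem_range.2 fun _ => norm_nonneg _⟩ (⟨x, hx⟩ : S)

theorem inner_nonpos_of_isMetricProj_sum {E F : Set (EuclideanSpace ℝ (Fin n))}
    {e f y z : EuclideanSpace ℝ (Fin n)} (he : e ∈ E) (hf : f ∈ F)
    (hy : IsMetricProj E (e + f) y) (hz : IsMetricProj F (e + f) z) (hyz : ⟪y, z⟫ = 0) :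
    ⟪e, f⟫ ≤ 0 := by
  have hyf : ‖e + f - y‖ ≤ ‖f‖ := by simpa using hy.2 e he
  have hze : ‖e + f - z‖ ≤ ‖e‖ := by simpa using hz.2 f hf
  have hnorm := norm_sq_le_of_inner_eq_zero (u := e + f) hyz
  rw [norm_add_sq_real] at hnorm
  nlinarith [norm_nonneg (e + f - y), norm_nonneg (e + f - z)]

end

theorem subset_polar_of_orthogonal_projections_general
(n : ℕ) (E F : Set (EuclideanSpace ℝ (Fin n)))
    (hEne : E.Nonempty) (hEcl : IsClosed E) (hEconv : Convex ℝ E)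
    (hFne : F.Nonempty) (hFcl : IsClosed F) (hFconv : Convex ℝ F)
    (horth : ∀ u y z : EuclideanSpace ℝ (Fin n),
      IsMetricProj E u y → IsMetricProj F u z → ⟪y, z⟫ = 0) :
    E ⊆ polarSet F ∧ F ⊆ polarSet E := by
  have hpolar : ∀ e ∈ E, ∀ f ∈ F, ⟪e, f⟫ ≤ 0 := by
    intro e he f hf
    obtain ⟨y, hy⟩ := exists_isMetricProj hEne hEcl hEconv (e + f)
    obtain ⟨z, hz⟩ := exists_isMetricProj hFne hFcl hFconv (e + f)
    exact inner_nonpos_of_isMetricProj_sum he hf hy hz (horth _ y z hy hz)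
  exact ⟨fun e he f hf => hpolar e he f hf,
    fun f hf e he => real_inner_comm e f ▸ hpolar e he f hf⟩

theorem subset_polar_of_orthogonal_projections
(n : ℕ) (E F : Set (EuclideanSpace ℝ (Fin n)))
    (hEne : E.Nonempty) (hEcl : IsClosed E) (hEconv : Convex ℝ E)
    (hFne : F.Nonempty) (hFcl : IsClosed F) (hFconv : Convex ℝ F)
    (hsum : E + F = Set.univ)
    (horth : ∀ u y z : EuclideanSpace ℝ (Fin n),
      IsMetricProj E u y → IsMetricProj F u z → ⟪y, z⟫ = 0) :
    E ⊆ polarSet F ∧ F ⊆ polarSet E :=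
  subset_polar_of_orthogonal_projections_general n E F hEne hEcl hEconv hFne hFcl hFconv horth
end

section
/- Let E and F be nonempty closed convex sets in ℝⁿ such that E + F = ℝⁿ and for every u ∈ ℝⁿ the metric projections p_E(u) and p_F(u) are orthogonal, i.e., p_E(u) · p_F(u) = 0. If the origin belongs to the relative interior of E or to the relative interior of F, then E and F are complementary orthogonal linear subspaces of ℝⁿ: E = F^⊥ and F = E^⊥. -/
/-!
Taking `u = f ∈ F`, the projection of `f` on `F` is `f` itself, so the projection `y` of `f` on `E`
satisfies `⟪y, f⟫ = 0`. If `0 ∈ E`, the variational inequality at `0` gives `‖y‖² ≤ ⟪f, y⟫ = 0`, so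
`f` projects to `0`, i.e. `f` lies in the polar of `E`. When `0` is in the relative interior of `E`,
every `e ∈ E` can be reflected slightly through `0` inside `E`, so the polar of `E` is `E^⊥`. Hence
`E ⊥ F`, and `E + F = ℝⁿ` forces `E = F^⊥` and `F = E^⊥`.
-/

open RealInnerProductSpace Pointwise Topology

theorem exists_pos_add_smul_sub_mem_of_mem_intrinsicInterior {V : Type*} [NormedAddCommGroup V]
    [NormedSpace ℝ V] {E : Set V} {x e : V} (hx : x ∈ intrinsicInterior ℝ E) (he : e ∈ E) :
    ∃ t : ℝ, 0 < t ∧ x + t • (x - e) ∈ E := by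
  obtain ⟨y, hy, rfl⟩ := mem_intrinsicInterior.1 hx
  have hmem (t : ℝ) : (y : V) + t • (y - e) ∈ affineSpan ℝ E := by
    simpa [add_comm] using
      AffineSubspace.smul_vsub_vadd_mem _ t y.2 (subset_affineSpan ℝ E he) y.2
  let γ : ℝ → affineSpan ℝ E := fun t => ⟨y + t • (y - e), hmem t⟩
  have hγ0 : γ 0 = y := Subtype.ext (by simp [γ])
  have hγ : Continuous γ := by fun_prop
  have hev : ∀ᶠ t in 𝓝 (0 : ℝ), γ t ∈ interior ((↑) ⁻¹' E) :=
    hγ.continuousAt.preimage_mem_nhds (hγ0 ▸ isOpen_interior.mem_nhds hy)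
  obtain ⟨t, ht, htpos⟩ := ((hev.filter_mono nhdsWithin_le_nhds).and self_mem_nhdsWithin).exists
    (f := 𝓝[>] (0 : ℝ))
  exact ⟨t, htpos, (interior_subset ht : γ t ∈ (↑) ⁻¹' E)⟩

section MetricProj

variable {n : ℕ} {E F : Set (EuclideanSpace ℝ (Fin n))} {u y : EuclideanSpace ℝ (Fin n)}

theorem isMetricProj_iff_norm_eq_iInf (hy : y ∈ E) :
    IsMetricProj E u y ↔ ‖u - y‖ = ⨅ x : E, ‖u - x‖ := by
  have : Nonempty E := ⟨⟨y, hy⟩⟩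
  have hbdd : BddBelow (Set.range fun x : E => ‖u - x‖) := ⟨0, by rintro _ ⟨_, rfl⟩; positivity⟩
  exact ⟨fun h => le_antisymm (le_ciInf fun x => h.2 x x.2) (ciInf_le hbdd ⟨y, hy⟩),
    fun h => ⟨hy, fun x hx => h ▸ ciInf_le hbdd ⟨x, hx⟩⟩⟩

theorem exists_isMetricProj_s11 (hEne : E.Nonempty) (hEcl : IsClosed E) (hEconv : Convex ℝ E)
    (u : EuclideanSpace ℝ (Fin n)) : ∃ y, IsMetricProj E u y := by
  obtain ⟨y, hy, hmin⟩ := exists_norm_eq_iInf_of_complete_convex hEne hEcl.isComplete hEconv u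
  exact ⟨y, (isMetricProj_iff_norm_eq_iInf hy).2 hmin⟩

theorem isMetricProj_self (hu : u ∈ E) : IsMetricProj E u u :=
  ⟨hu, fun x _ => by simp⟩

theorem IsMetricProj.inner_sub_le_zero (hEconv : Convex ℝ E) (h : IsMetricProj E u y) :
    ∀ x ∈ E, ⟪u - y, x - y⟫ ≤ 0 :=
  (norm_eq_iInf_iff_real_inner_le_zero hEconv h.1).1 ((isMetricProj_iff_norm_eq_iInf h.1).1 h)

theorem IsMetricProj.eq_zero_of_inner_eq_zero (hEconv : Convex ℝ E) (h0 : 0 ∈ E)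
    (h : IsMetricProj E u y) (hyu : ⟪y, u⟫ = 0) : y = 0 := by
  have hvar := h.inner_sub_le_zero hEconv 0 h0
  rw [zero_sub, inner_neg_right, inner_sub_left, real_inner_comm, hyu,
    real_inner_self_eq_norm_sq] at hvar
  simpa using (show ‖y‖ ^ 2 ≤ 0 by linarith)

theorem IsMetricProj.mem_polarSet (hEconv : Convex ℝ E) (h : IsMetricProj E u 0) :
    u ∈ polarSet E :=
  fun x hx => by simpa using h.inner_sub_le_zero hEconv x hx

theorem mem_orthComp_of_mem_polarSet (h0 : 0 ∈ intrinsicInterior ℝ E) (hu : u ∈ polarSet E) :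
    u ∈ orthComp E := by
  intro e he
  obtain ⟨t, htpos, hte⟩ := exists_pos_add_smul_sub_mem_of_mem_intrinsicInterior h0 he
  have hneg := hu _ hte
  rw [zero_add, zero_sub, smul_neg, inner_neg_right, real_inner_smul_right] at hneg
  exact le_antisymm (hu e he) ((mul_nonneg_iff_of_pos_left htpos).1 (neg_nonpos.1 hneg))

theorem subset_orthComp_comm : E ⊆ orthComp F ↔ F ⊆ orthComp E :=
  ⟨fun h f hf e he => real_inner_comm e f ▸ h he f hf,
    fun h e he f hf => real_inner_comm f e ▸ h hf e he⟩

theorem eq_orthComp_of_subset_of_add_eq_univ (hEF : E ⊆ orthComp F) (hsum : E + F = Set.univ) :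
    E = orthComp F := by
  refine hEF.antisymm fun x hx => ?_
  obtain ⟨e, he, f, hf, rfl⟩ := Set.mem_add.1 (hsum.symm ▸ Set.mem_univ x)
  have hf0 : f = 0 := by
    have := hx f hf
    rwa [inner_add_left, hEF he f hf, zero_add, inner_self_eq_zero] at this
  simpa [hf0] using he

theorem subset_orthComp_of_zero_mem_intrinsicInterior (hEcl : IsClosed E) (hEconv : Convex ℝ E)
    (h0 : 0 ∈ intrinsicInterior ℝ E)
    (horth : ∀ u y z, IsMetricProj E u y → IsMetricProj F u z → ⟪y, z⟫ = 0) :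
    F ⊆ orthComp E := by
  intro f hf
  have h0E : (0 : EuclideanSpace ℝ (Fin n)) ∈ E := intrinsicInterior_subset h0
  obtain ⟨y, hy⟩ := exists_isMetricProj_s11 ⟨0, h0E⟩ hEcl hEconv f
  obtain rfl : y = 0 :=
    hy.eq_zero_of_inner_eq_zero hEconv h0E (horth f y f hy (isMetricProj_self hf))
  exact mem_orthComp_of_mem_polarSet h0 (hy.mem_polarSet hEconv)

end MetricProj

theorem complementary_subspaces_of_origin_in_relint_general
(n : ℕ) (E F : Set (EuclideanSpace ℝ (Fin n)))
    (hEcl : IsClosed E) (hEconv : Convex ℝ E)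
    (hFcl : IsClosed F) (hFconv : Convex ℝ F)
    (hsum : E + F = Set.univ)
    (horth : ∀ u y z : EuclideanSpace ℝ (Fin n),
      IsMetricProj E u y → IsMetricProj F u z → ⟪y, z⟫ = 0)
    (hri : (0 : EuclideanSpace ℝ (Fin n)) ∈ intrinsicInterior ℝ E ∨
      (0 : EuclideanSpace ℝ (Fin n)) ∈ intrinsicInterior ℝ F) :
    E = orthComp F ∧ F = orthComp E := by
  have hFE : F ⊆ orthComp E := by
    rcases hri with h0 | h0
    · exact subset_orthComp_of_zero_mem_intrinsicInterior hEcl hEconv h0 horth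
    · refine subset_orthComp_comm.1 (subset_orthComp_of_zero_mem_intrinsicInterior hFcl hFconv h0
        fun u y z hy hz => ?_)
      rw [real_inner_comm]
      exact horth u z y hz hy
  exact ⟨eq_orthComp_of_subset_of_add_eq_univ (subset_orthComp_comm.2 hFE) hsum,
    eq_orthComp_of_subset_of_add_eq_univ hFE (add_comm E F ▸ hsum)⟩

theorem complementary_subspaces_of_origin_in_relint
(n : ℕ) (E F : Set (EuclideanSpace ℝ (Fin n)))
    (hEne : E.Nonempty) (hEcl : IsClosed E) (hEconv : Convex ℝ E)
    (hFne : F.Nonempty) (hFcl : IsClosed F) (hFconv : Convex ℝ F)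
    (hsum : E + F = Set.univ)
    (horth : ∀ u y z : EuclideanSpace ℝ (Fin n),
      IsMetricProj E u y → IsMetricProj F u z → ⟪y, z⟫ = 0)
    (hri : (0 : EuclideanSpace ℝ (Fin n)) ∈ intrinsicInterior ℝ E ∨
      (0 : EuclideanSpace ℝ (Fin n)) ∈ intrinsicInterior ℝ F) :
    E = orthComp F ∧ F = orthComp E :=
  complementary_subspaces_of_origin_in_relint_general n E F hEcl hEconv hFcl hFconv hsum horth hri
end
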